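/- Let M be a positive integer, χ a primitive Dirichlet character modulo M, q a positive integer with gcd(q, M) = 1, and k an integer. Then Σ_{b=1}^{Mq} χ(b) e^{2πibk/(Mq)} = q χ(q) χ̄(k) τ(χ) if q divides k, and the sum equals 0 otherwise. -/

import Mathlib

/-!
Write `b = r + M t` with `0 ≤ r < M`, `0 ≤ t < q`. Since `χ(b) = χ(r)` and
`e(bk/Mq) = e(rk/Mq) e(tk/q)`, the sum factors as `(∑_r χ(r) e(rk/Mq)) · ∑_t e(tk/q)`.
The second factor is `q` or `0` according as `q ∣ k`. If `k = qm`, the first factor is the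
Gauss sum of `χ` against the additive character `x ↦ e(mx/M)`, which for primitive `χ` equals
`χ̄(m) τ(χ)`; finally `χ̄(m) = χ(q) χ̄(qm)` because `q` is a unit modulo `M`.
-/

/-- The Gauss sum `τ(χ) = ∑_{b=1}^{M} χ(b) e^{2πib/M}`. -/
noncomputable def gaussSumExp (M : ℕ) (χ : DirichletCharacter ℂ M) : ℂ :=
  ∑ b ∈ Finset.Icc 1 M, χ (b : ZMod M) * Complex.exp (2 * Real.pi * Complex.I * b / M)

open Finset Complex
open scoped Real

section Reindexing

variable {R : Type*} [AddCommMonoid R]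

lemma sum_Icc_one_eq_sum_range_of_eq {n : ℕ} (f : ℕ → R) (h : f n = f 0) :
    ∑ b ∈ Icc 1 n, f b = ∑ b ∈ range n, f b := by
  rw [← Ico_add_one_right_eq_Icc, ← sum_Ico_add' f 0 n 1, ← range_eq_Ico]
  cases n with
  | zero => simp
  | succ n => rw [sum_range_succ, sum_range_succ', h]

lemma sum_range_mul_eq_sum_sum (f : ℕ → R) (m n : ℕ) :
    ∑ b ∈ range (m * n), f b = ∑ t ∈ range m, ∑ r ∈ range n, f (r + n * t) := by
  simp only [← Fin.sum_univ_eq_sum_range]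
  rw [← (finProdFinEquiv (m := m) (n := n)).sum_comp, Fintype.sum_prod_type]
  rfl

lemma sum_range_eq_sum_zmod {N : ℕ} [NeZero N] (g : ZMod N → R) :
    ∑ r ∈ range N, g r = ∑ x : ZMod N, g x := by
  rw [← Fin.sum_univ_eq_sum_range (fun r ↦ g r), ← (ZMod.finEquiv N).toEquiv.sum_comp]
  obtain ⟨n, rfl⟩ := Nat.exists_eq_succ_of_ne_zero (NeZero.ne N)
  exact sum_congr rfl fun r _ ↦ congrArg g (Fin.cast_val_eq_self r)

end Reindexing

lemma exp_two_pi_I_mul_mul_div_eq_stdAddChar (N : ℕ) [NeZero N] (r : ℕ) (m : ℤ) :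
    exp (2 * π * I * r * m / N) = ZMod.stdAddChar ((r : ZMod N) * (m : ZMod N)) := by
  have hcast : (r : ZMod N) * (m : ZMod N) = ((r * m : ℤ) : ZMod N) := by push_cast; rfl
  rw [hcast, ZMod.stdAddChar_coe]
  push_cast
  ring_nf

lemma sum_range_exp_eq_ite {q : ℕ} (hq : 0 < q) (k : ℤ) :
    ∑ t ∈ range q, exp (2 * π * I * t * k / q) = if (q : ℤ) ∣ k then (q : ℂ) else 0 := by
  have : NeZero q := ⟨hq.ne'⟩
  classical
  simp_rw [exp_two_pi_I_mul_mul_div_eq_stdAddChar]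
  rw [sum_range_eq_sum_zmod (fun x ↦ ZMod.stdAddChar (x * (k : ZMod q))),
    AddChar.sum_mulShift _ (ZMod.isPrimitive_stdAddChar q)]
  simp only [ZMod.intCast_zmod_eq_zero_iff_dvd, ZMod.card, Nat.cast_ite, Nat.cast_zero]

lemma sum_range_mul_exp_eq_gaussSum_mulShift {N : ℕ} [NeZero N] (f : MulChar (ZMod N) ℂ)
    (m : ℤ) :
    ∑ r ∈ range N, f r * exp (2 * π * I * r * m / N) =
      gaussSum f (ZMod.stdAddChar.mulShift (m : ZMod N)) := by
  simp_rw [exp_two_pi_I_mul_mul_div_eq_stdAddChar]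
  rw [sum_range_eq_sum_zmod (fun x ↦ f x * ZMod.stdAddChar (x * (m : ZMod N)))]
  simp only [gaussSum, AddChar.mulShift_apply, mul_comm]

lemma gaussSumExp_eq_gaussSum {M : ℕ} [NeZero M] (χ : DirichletCharacter ℂ M) :
    gaussSumExp M χ = gaussSum χ ZMod.stdAddChar := by
  rw [gaussSumExp, sum_Icc_one_eq_sum_range_of_eq]
  · simpa using sum_range_mul_exp_eq_gaussSum_mulShift χ 1
  · have hM : (M : ℂ) ≠ 0 := NeZero.ne _
    simp [hM]

lemma sum_Icc_mul_exp_eq_mul_sum_range {M q : ℕ} (hM : 0 < M) (hq : 0 < q) (f : ZMod M → ℂ)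
    (k : ℤ) :
    ∑ b ∈ Icc 1 (M * q), f b * exp (2 * π * I * b * k / (M * q)) =
      (∑ r ∈ range M, f r * exp (2 * π * I * r * k / (M * q))) *
        ∑ t ∈ range q, exp (2 * π * I * t * k / q) := by
  have hM' : (M : ℂ) ≠ 0 := by exact_mod_cast hM.ne'
  have hq' : (q : ℂ) ≠ 0 := by exact_mod_cast hq.ne'
  rw [sum_Icc_one_eq_sum_range_of_eq, Nat.mul_comm M q, sum_range_mul_eq_sum_sum, sum_mul_sum,
    sum_comm]
  · refine sum_congr rfl fun r _ ↦ sum_congr rfl fun t _ ↦ ?_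
    have hexp : 2 * π * I * ((r + M * t : ℕ) : ℂ) * k / (M * q) =
        2 * π * I * r * k / (M * q) + 2 * π * I * t * k / q := by
      push_cast
      field_simp
    rw [hexp, exp_add, Nat.cast_add, Nat.cast_mul, ZMod.natCast_self, zero_mul, add_zero,
      ← mul_assoc]
  · have hexp : 2 * π * I * ((M * q : ℕ) : ℂ) * k / (M * q) = k * (2 * π * I) := by
      push_cast
      field_simp
    rw [hexp, exp_int_mul_two_pi_mul_I]
    simp

lemma MulChar.apply_mul_star_apply_mul {R : Type*} [CommRing R] [Finite Rˣ] (χ : MulChar R ℂ)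
    {a : R} (ha : IsUnit a) (b : R) : χ a * star (χ (a * b)) = χ⁻¹ b := by
  rw [star_apply', map_mul, ← mul_assoc, ← Pi.mul_apply (f := χ), ← coeToFun_mul,
    mul_inv_cancel, one_apply ha, one_mul]

theorem complete_character_sum_eval
    (M q : ℕ) (hM : 0 < M) (hq : 0 < q)
    (χ : DirichletCharacter ℂ M) (hχ : χ.IsPrimitive)
    (hqM : Nat.gcd q M = 1) (k : ℤ) :
    (∑ b ∈ Finset.Icc 1 (M * q),
        χ (b : ZMod M) * Complex.exp (2 * Real.pi * Complex.I * b * k / (M * q))) =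
      if (q : ℤ) ∣ k then
        (q : ℂ) * χ (q : ZMod M) * (starRingEnd ℂ) (χ (k : ZMod M)) * gaussSumExp M χ
      else 0 := by
  have : NeZero M := ⟨hM.ne'⟩
  rw [sum_Icc_mul_exp_eq_mul_sum_range hM hq, sum_range_exp_eq_ite hq]
  split_ifs with hdvd
  · obtain ⟨m, rfl⟩ := hdvd
    have hq' : (q : ℂ) ≠ 0 := by exact_mod_cast hq.ne'
    have hexp (r : ℕ) : 2 * π * I * r * ((q * m : ℤ) : ℂ) / (M * q) = 2 * π * I * r * m / M := by
      push_cast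
      field_simp
    have hunit : IsUnit (q : ZMod M) := (ZMod.isUnit_iff_coprime q M).mpr hqM
    simp_rw [hexp]
    rw [sum_range_mul_exp_eq_gaussSum_mulShift, gaussSum_mulShift_of_isPrimitive _ hχ,
      gaussSumExp_eq_gaussSum, mul_assoc (q : ℂ), starRingEnd_apply, Int.cast_mul,
      Int.cast_natCast, χ.apply_mul_star_apply_mul hunit]
    ring
  · rw [mul_zero]
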